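/- arXiv:2205.01566 — 3 statements merged into one kernel-verified Lean document; each statement's English description precedes it below -/
import Mathlib

section
/- For every integer m > 7, the number of pairs (i, j) of integers with 2·2^{m−7} ≤ i < 2^{m−3}, 0 ≤ j < 2^{m−7}, and binom(i+1+j, j) ≡ 0 (mod 2) equals 14·(4^{m−7} − 3^{m−7}). Equivalently, the relative number of 1s in the matrix D_m = (binom(i+1+j, j) + 1 mod 2), with i ranging over 2^{m−3} − 14·2^{m−7} ≤ i < 2^{m−3} and 0 ≤ j < 2^{m−7}, is 1 − (3/4)^{m−7}. -/
/-!
By Lucas' theorem, `(k + j).choose j` is odd exactly when the binary digits of `j` avoid those of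
`k`. Hence the number of odd entries in row `k` of the `2 ^ n` columns is `2` raised to the number
of zero digits of `k` below `2 ^ n`: it depends only on `k` mod `2 ^ n` and sums to `3 ^ n` over a
period. The `14 · 2 ^ n` rows thus contain `14 · 3 ^ n` odd entries among `14 · 4 ^ n`.
-/

open Finset Function

theorem Nat.choose_add_mod_two (k j : ℕ) :
    (k + j).choose j % 2 =
      if k % 2 = 1 ∧ j % 2 = 1 then 0 else (k / 2 + j / 2).choose (j / 2) % 2 := by
  have lucas := Choose.choose_modEq_choose_mod_mul_choose_div_nat (p := 2) (n := k + j) (k := j)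
  have carry : (k + j) / 2 = k / 2 + j / 2 + if k % 2 = 1 ∧ j % 2 = 1 then 1 else 0 := by
    split_ifs <;> omega
  rw [Nat.ModEq, carry, Nat.add_mod] at lucas
  rcases Nat.mod_two_eq_zero_or_one k with hk | hk <;>
    rcases Nat.mod_two_eq_zero_or_one j with hj | hj <;> simp_all

theorem Finset.sum_range_two_mul {M : Type*} [AddCommMonoid M] (f : ℕ → M) (N : ℕ) :
    ∑ j ∈ range (2 * N), f j = ∑ a ∈ range N, (f (2 * a) + f (2 * a + 1)) := by
  induction N with
  | zero => simp
  | succ N ih => rw [Nat.mul_succ, sum_range_succ, sum_range_succ, sum_range_succ, ih, add_assoc]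

section Periodic

variable {M : Type*} [AddCommMonoid M] {f : ℕ → M} {a : ℕ}

theorem Function.Periodic.sum_Ico_eq_sum_range (hf : Periodic f a) (s : ℕ) :
    ∑ k ∈ Ico s (s + a), f k = ∑ k ∈ range a, f k := by
  rw [← Nat.image_Ico_mod s a, sum_image (Nat.mod_injOn_Ico s a)]
  exact sum_congr rfl fun k _ => (hf.map_mod_nat k).symm

theorem Function.Periodic.sum_Ico_add_mul (hf : Periodic f a) (s c : ℕ) :
    ∑ k ∈ Ico s (s + c * a), f k = c • ∑ k ∈ range a, f k := by
  induction c with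
  | zero => simp
  | succ c ih =>
    rw [← sum_Ico_consecutive f (Nat.le_add_right s (c * a)) (by nlinarith), ih,
      add_mul, one_mul, ← add_assoc, hf.sum_Ico_eq_sum_range, succ_nsmul]

end Periodic

def oddChooseCount (n k : ℕ) : ℕ := #{j ∈ range (2 ^ n) | (k + j).choose j % 2 = 1}

theorem oddChooseCount_zero (k : ℕ) : oddChooseCount 0 k = 1 := by
  simp [oddChooseCount, filter_singleton]

theorem oddChooseCount_succ (n k : ℕ) :
    oddChooseCount (n + 1) k = (if k % 2 = 1 then 1 else 2) * oddChooseCount n (k / 2) := by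
  simp only [oddChooseCount, card_filter, pow_succ', sum_range_two_mul, mul_sum]
  refine sum_congr rfl fun b _ => ?_
  have hdiv : 2 * b / 2 = b ∧ (2 * b + 1) / 2 = b := by omega
  have hmod : 2 * b % 2 = 0 ∧ (2 * b + 1) % 2 = 1 := by omega
  rw [Nat.choose_add_mod_two k (2 * b), Nat.choose_add_mod_two k (2 * b + 1), hdiv.1, hdiv.2,
    hmod.1, hmod.2]
  rcases Nat.mod_two_eq_zero_or_one k with hk | hk <;> simp only [hk] <;> split_ifs <;> simp_all

theorem oddChooseCount_periodic (n : ℕ) : Periodic (oddChooseCount n) (2 ^ n) := by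
  induction n with
  | zero => simp [Periodic, oddChooseCount_zero]
  | succ n ih =>
    intro k
    have hmod : (k + 2 ^ (n + 1)) % 2 = k % 2 := by rw [pow_succ]; omega
    have hdiv : (k + 2 ^ (n + 1)) / 2 = k / 2 + 2 ^ n := by rw [pow_succ]; omega
    rw [oddChooseCount_succ, oddChooseCount_succ, hmod, hdiv, ih]

theorem sum_range_oddChooseCount (n : ℕ) : ∑ k ∈ range (2 ^ n), oddChooseCount n k = 3 ^ n := by
  induction n with
  | zero => simp [oddChooseCount_zero]
  | succ n ih =>
    have pair (a : ℕ) :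
        oddChooseCount (n + 1) (2 * a) + oddChooseCount (n + 1) (2 * a + 1) =
          3 * oddChooseCount n a := by
      have : 2 * a % 2 = 0 ∧ (2 * a + 1) % 2 = 1 ∧ 2 * a / 2 = a ∧ (2 * a + 1) / 2 = a := by omega
      simp only [oddChooseCount_succ, this, zero_ne_one, if_false, if_true]
      ring
    rw [pow_succ', sum_range_two_mul, sum_congr rfl fun a _ => pair a, ← mul_sum, ih, pow_succ']

theorem sum_Ico_oddChooseCount (n s c : ℕ) :
    ∑ k ∈ Ico s (s + c * 2 ^ n), oddChooseCount n k = c * 3 ^ n := by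
  rw [(oddChooseCount_periodic n).sum_Ico_add_mul, sum_range_oddChooseCount, smul_eq_mul]

/-- For `m > 7`, the number of pairs `(i,j)` with `2·2^{m−7} ≤ i < 2^{m−3}`,
`0 ≤ j < 2^{m−7}` and `binom(i+1+j, j)` even equals `14·(4^{m−7} − 3^{m−7})`;
equivalently, the relative number of `1`s in the matrix
`D_m = (binom(i+1+j,j) + 1 mod 2)` is `1 − (3/4)^{m−7}`. -/
theorem count_even_choose (m : ℕ) (hm : 7 < m) :
    ((Finset.Ico (2 * 2 ^ (m - 7)) (2 ^ (m - 3)) ×ˢ Finset.range (2 ^ (m - 7))).filter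
      (fun p => Nat.choose (p.1 + 1 + p.2) p.2 % 2 = 0)).card
      = 14 * (4 ^ (m - 7) - 3 ^ (m - 7)) := by
  obtain ⟨n, rfl⟩ : ∃ n, m = n + 7 := ⟨m - 7, by omega⟩
  have hrows : 2 ^ (n + 7 - 3) = 2 * 2 ^ n + 14 * 2 ^ n := by
    rw [show n + 7 - 3 = 4 + n by omega, pow_add]; ring
  simp only [Nat.add_sub_cancel, hrows]
  set S := Ico (2 * 2 ^ n) (2 * 2 ^ n + 14 * 2 ^ n) ×ˢ range (2 ^ n)
  have hcard : #S = 14 * 4 ^ n := by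
    rw [card_product, Nat.card_Ico, Nat.add_sub_cancel_left, card_range,
      show 4 = 2 * 2 from rfl, mul_pow, mul_assoc]
  have hodd : #{p ∈ S | (p.1 + 1 + p.2).choose p.2 % 2 = 1} = 14 * 3 ^ n := by
    rw [card_filter, sum_product]
    simp only [← card_filter, ← oddChooseCount.eq_1]
    rw [sum_Ico_add' (oddChooseCount n), add_right_comm, sum_Ico_oddChooseCount]
  have hsplit := card_filter_add_card_filter_not (s := S)
    (fun p => (p.1 + 1 + p.2).choose p.2 % 2 = 1)
  simp only [Nat.mod_two_ne_one] at hsplit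
  have h34 : 3 ^ n ≤ 4 ^ n := Nat.pow_le_pow_left (by norm_num) n
  rw [Nat.mul_sub]
  omega
end

section
/- For all nonnegative integers t ≥ 1, k and every l with 0 ≤ l ≤ t − 1 one has ∑_{j=0}^{t−1} binom(t, j)·binom(k+l+j, l) ≡ binom(k+l+t, l) (mod 2). -/
/-!
The alternating sum `∑_{j ≤ t} (-1)^(t-j) binom(t, j) binom(n + j, l)` is the `t`-th forward
difference of `x ↦ binom(x, l)` at `n`, which vanishes because this is a polynomial of degree
`l < t`. Modulo 2 the signs disappear, so `∑_{j ≤ t} binom(t, j) binom(n + j, l)` is even; its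
last term (`j = t`) is `binom(n + t, l)`.
-/

open Finset Function fwdDiff

theorem fwdDiff_iter_choose_eq_zero_of_lt {l t : ℕ} (h : l < t) :
    (Δ_[1])^[t] (fun x ↦ x.choose l : ℕ → ℤ) = 0 := by
  obtain ⟨d, rfl⟩ := Nat.exists_eq_add_of_lt h
  have hl : (Δ_[1])^[l] (fun x ↦ x.choose l : ℕ → ℤ) = fun _ ↦ 1 := by
    simpa using fwdDiff_iter_choose 0 l
  rw [show l + d + 1 = d + 1 + l by ring, iterate_add_apply, hl, iterate_succ_apply, fwdDiff_const]
  exact iterate_fixed (fwdDiff_const 1 0) d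

theorem sum_range_neg_one_pow_mul_choose_mul_add_choose {l t : ℕ} (h : l < t) (n : ℕ) :
    ∑ j ∈ range (t + 1), (-1 : ℤ) ^ (t - j) * t.choose j * (n + j).choose l = 0 := by
  have := congr_fun (fwdDiff_iter_choose_eq_zero_of_lt h) n
  rw [fwdDiff_iter_eq_sum_shift] at this
  simpa using this

theorem sum_range_choose_mul_add_choose_zmod_two {l t : ℕ} (h : l < t) (n : ℕ) :
    (∑ j ∈ range (t + 1), t.choose j * (n + j).choose l : ZMod 2) = 0 := by
  have := congr_arg (Int.cast : ℤ → ZMod 2) (sum_range_neg_one_pow_mul_choose_mul_add_choose h n)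
  push_cast at this
  simpa [ZMod.neg_eq_self_mod_two] using this

/-- For `t ≥ 1`, all `k ≥ 0` and every `l` with `0 ≤ l ≤ t − 1`:
`∑_{j=0}^{t−1} binom(t,j)·binom(k+l+j, l) ≡ binom(k+l+t, l) (mod 2)`. -/
theorem sum_choose_mul_choose_range_mod_two (t k l : ℕ) (ht : 1 ≤ t) (hl : l ≤ t - 1) :
    (∑ j ∈ Finset.range t, Nat.choose t j * Nat.choose (k + l + j) l) ≡
      Nat.choose (k + l + t) l [MOD 2] := by
  have hfull := sum_range_choose_mul_add_choose_zmod_two (by omega : l < t) (k + l)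
  rw [sum_range_succ, Nat.choose_self, Nat.cast_one, one_mul] at hfull
  rw [← ZMod.natCast_eq_natCast_iff]
  push_cast
  rw [eq_neg_of_add_eq_zero_left hfull, ZMod.neg_eq_self_mod_two]
end

section
/- Let α be Levin's normal number in base 2. For every integer m ≥ 1, all integers i, k with 0 ≤ i < 2^m, 0 ≤ k < 2^m and k + i ≤ 2^m, every integer B with 0 ≤ B < 2^{2^m − i}, and every integer c with 0 ≤ c < 2^i, there exists exactly one integer n with B·2^i ≤ n < B·2^i + 2^i such that {2^{n_m + 2^m·n + k}·α} ∈ [c/2^i, (c+1)/2^i). -/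
open scoped Classical

/-- `n_m = ∑_{i=1}^{m-1} 2^i · 2^{2^i}` (so `n_1 = 0`). -/
def levinN (m : ℕ) : ℕ := ∑ i ∈ Finset.Ico 1 m, 2 ^ i * 2 ^ (2 ^ i)

/-- The digit `d_k(n)` in block `A_m` of Levin's normal number. -/
def levinD (m k n : ℕ) : ℕ :=
  (∑ j ∈ Finset.range (2 ^ m), (Nat.choose (k + j) j % 2) * (n / 2 ^ j % 2)) % 2

/-- Levin's normal number `α` in base 2. -/
noncomputable def levinAlpha : ℝ :=
  ∑' m : ℕ, ∑ n ∈ Finset.range (2 ^ 2 ^ (m + 1)), ∑ k ∈ Finset.range (2 ^ (m + 1)),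
    (levinD (m + 1) k n : ℝ) / 2 ^ (levinN (m + 1) + 2 ^ (m + 1) * n + k + 1)

/-!
Let `d` be the sequence of binary digits of `α`. The digits `d_k(0)` vanish and occur in every
block, so `{2^N α}` is the binary fraction `0.d_N d_{N+1} …` and lies in
`[c/2^i, (c+1)/2^i)` exactly when the `i` digits starting at `N` spell `c`.
For `N = n_m + 2^m n + k` these digits are `d_k(n), …, d_{k+i-1}(n)`, and for
`n = B·2^i + r` with `r < 2^i` they form, over `𝔽₂`, the vector `M · bits(r) + v_B` with
`M = (binom(k+t+j, j))_{t,j<i}`. This matrix has determinant `1`, so the `2^i` values of `r` give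
`2^i` distinct digit strings of length `i`, i.e. each string, hence each `c`, exactly once.
-/

open Finset Filter

theorem Finset.sum_range_mul_eq_sum_sum {M : Type*} [AddCommMonoid M] (f : ℕ → M) (L A : ℕ) :
    ∑ p ∈ range (L * A), f p = ∑ n ∈ range A, ∑ k ∈ range L, f (L * n + k) := by
  induction A with
  | zero => simp
  | succ A ih => rw [mul_add_one, sum_range_add, ih, sum_range_succ]

theorem hasSum_sum_Ico_of_nonneg {g : ℕ → ℝ} (hg : Summable g) (hg0 : ∀ p, 0 ≤ g p)
    {s : ℕ → ℕ} (hs : Monotone s) (hs0 : s 0 = 0) (hs_top : Tendsto s atTop atTop) :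
    HasSum (fun m => ∑ p ∈ Ico (s m) (s (m + 1)), g p) (∑' p, g p) := by
  have partial_sums : ∀ M, ∑ m ∈ range M, ∑ p ∈ Ico (s m) (s (m + 1)), g p =
      ∑ p ∈ range (s M), g p := by
    intro M
    induction M with
    | zero => simp [hs0]
    | succ M ih => rw [sum_range_succ, ih, sum_range_add_sum_Ico _ (hs M.le_succ)]
  rw [hasSum_iff_tendsto_nat_of_nonneg (fun m => sum_nonneg fun p _ => hg0 p)]
  exact (hg.hasSum.tendsto_sum_nat.comp hs_top).congr fun M => (partial_sums M).symm

theorem mem_Ico_div_iff_floor_eq {x q : ℝ} (hx : 0 ≤ x) (hq : 0 < q) (c : ℕ) :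
    x ∈ Set.Ico ((c : ℝ) / q) ((c + 1) / q) ↔ ⌊q * x⌋₊ = c := by
  rw [Nat.floor_eq_iff (by positivity), Set.mem_Ico, div_le_iff₀' hq, lt_div_iff₀' hq]

theorem existsUnique_mem_Ico_of_injOn {f : ℕ → ℕ} {a L c : ℕ} (hmaps : ∀ n, f n < L)
    (hinj : Set.InjOn f (Set.Ico a (a + L))) (hc : c < L) :
    ∃! n, (a ≤ n ∧ n < a + L) ∧ f n = c := by
  obtain ⟨n, hn, hfn⟩ := surj_on_of_inj_on_of_card_le (s := Ico a (a + L)) (t := range L)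
    (fun n _ => f n) (fun n _ => mem_range.mpr (hmaps n))
    (fun n n' hn hn' h => hinj (by simpa using hn) (by simpa using hn') h) (by simp) c
    (mem_range.mpr hc)
  refine ⟨n, ⟨by simpa using hn, hfn.symm⟩, fun n' ⟨hn', hfn'⟩ => ?_⟩
  exact hinj hn' (by simpa using hn) (hfn'.trans hfn)

theorem Nat.eq_of_testBit_eq_of_lt_two_pow {x y i : ℕ} (hx : x < 2 ^ i) (hy : y < 2 ^ i)
    (h : ∀ j < i, x.testBit j = y.testBit j) : x = y := by
  refine Nat.eq_of_testBit_eq fun j => ?_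
  rcases lt_or_ge j i with hj | hj
  · exact h j hj
  · have hij := Nat.pow_le_pow_right two_pos hj
    rw [Nat.testBit_lt_two_pow (hx.trans_le hij), Nat.testBit_lt_two_pow (hy.trans_le hij)]

theorem Matrix.det_choose_add_add (R : Type*) [CommRing R] (i k : ℕ) :
    (Matrix.of fun t j : Fin i => ((k + t + j).choose j : R)).det = 1 := by
  let L : Matrix (Fin i) (Fin i) R := .of fun t l => ((t : ℕ).choose l : R)
  let U : Matrix (Fin i) (Fin i) R :=
    .of fun l j => if (l : ℕ) ≤ j then ((k + j).choose (j - l) : R) else 0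
  -- Vandermonde's identity `C(t + (k + j), j) = ∑ₗ C(t, l) C(k + j, j - l)` factors the matrix.
  have hLU : Matrix.of (fun t j : Fin i => ((k + t + j).choose j : R)) = L * U := by
    ext t j
    have hj : range (j + 1) = (range i).filter (· ≤ (j : ℕ)) := by
      ext l; simp only [mem_range, mem_filter]; omega
    rw [Matrix.mul_apply, Matrix.of_apply, show k + (t : ℕ) + j = t + (k + j) by ring,
      Nat.add_choose_eq, Nat.sum_antidiagonal_eq_sum_range_succ_mk, Nat.cast_sum, hj, sum_filter]
    simp only [L, U, Matrix.of_apply, mul_ite, mul_zero, Nat.cast_mul]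
    exact (Fin.sum_univ_eq_sum_range (fun l => if l ≤ (j : ℕ) then
      ((t : ℕ).choose l : R) * ((k + j).choose (j - l)) else 0) i).symm
  have hL : L.det = 1 := by
    rw [Matrix.det_of_isLowerTriangular L fun t l h => by
      simp [L, Nat.choose_eq_zero_of_lt (Fin.lt_def.mp (OrderDual.toDual_lt_toDual.mp h))]]
    simp [L]
  have hU : U.det = 1 := by
    rw [Matrix.det_of_isUpperTriangular fun l j h => by
      simp [U, (show j < l from h).not_ge]]
    simp [U]
  rw [hLU, Matrix.det_mul, hL, hU, one_mul]

namespace Real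

variable {b : ℕ}

theorem ofDigits_lt_one {d : ℕ → Fin b} {i : ℕ} (hi : (d i : ℕ) + 1 < b) :
    ofDigits d < 1 := by
  have hb : 1 < b := by omega
  rw [← ofDigits_const_last_eq_one' hb]
  refine Summable.tsum_lt_tsum (i := i) (fun n => ?_) ?_ summable_ofDigitsTerm
    summable_ofDigitsTerm
  · unfold ofDigitsTerm
    gcongr
    exact_mod_cast Nat.le_sub_one_of_lt (d n).isLt
  · unfold ofDigitsTerm
    gcongr
    exact_mod_cast Nat.lt_sub_of_add_lt hi

def digitPrefix (d : ℕ → Fin b) : ℕ → ℕ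
  | 0 => 0
  | n + 1 => b * digitPrefix d n + d n

theorem digitPrefix_lt (d : ℕ → Fin b) (n : ℕ) : digitPrefix d n < b ^ n := by
  induction n with
  | zero => simp [digitPrefix]
  | succ n ih =>
    have := (d n).isLt
    rw [digitPrefix, pow_succ]
    nlinarith

theorem eq_of_digitPrefix_eq {d d' : ℕ → Fin b} {n : ℕ}
    (h : digitPrefix d n = digitPrefix d' n) : ∀ t < n, d t = d' t := by
  induction n with
  | zero => simp
  | succ n ih =>
    have hb : 0 < b := (d 0).pos
    simp only [digitPrefix] at h
    have hlast : d n = d' n := Fin.ext (by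
      simpa [Nat.mul_add_mod, Nat.mod_eq_of_lt (d n).isLt, Nat.mod_eq_of_lt (d' n).isLt]
        using congrArg (· % b) h)
    have hprefix : digitPrefix d n = digitPrefix d' n := by
      rw [hlast] at h
      exact Nat.eq_of_mul_eq_mul_left hb (Nat.add_right_cancel h)
    intro t ht
    rcases Nat.lt_succ_iff_lt_or_eq.mp ht with ht | rfl
    exacts [ih hprefix t ht, hlast]

theorem pow_mul_ofDigits (d : ℕ → Fin b) (n : ℕ) :
    (b : ℝ) ^ n * ofDigits d = digitPrefix d n + ofDigits (fun i => d (i + n)) := by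
  induction n with
  | zero => simp [digitPrefix]
  | succ n ih =>
    have hb : (b : ℝ) ≠ 0 := by exact_mod_cast (d 0).pos.ne'
    have hshift := ofDigits_eq_sum_add_ofDigits (fun i => d (i + n)) 1
    simp only [range_one, sum_singleton, ofDigitsTerm, zero_add, pow_one, add_assoc,
      add_comm 1 n] at hshift
    rw [pow_succ', mul_assoc, ih, hshift, digitPrefix]
    field_simp
    push_cast
    ring

theorem floor_pow_mul_ofDigits {d : ℕ → Fin b} {n i : ℕ} (hi : (d (i + n) : ℕ) + 1 < b) :
    ⌊(b : ℝ) ^ n * ofDigits d⌋₊ = digitPrefix d n := by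
  rw [pow_mul_ofDigits, add_comm, Nat.floor_add_natCast (ofDigits_nonneg _),
    Nat.floor_eq_zero.mpr (ofDigits_lt_one (i := i) hi), zero_add]

theorem fract_pow_mul_ofDigits {d : ℕ → Fin b} {n i : ℕ} (hi : (d (i + n) : ℕ) + 1 < b) :
    Int.fract ((b : ℝ) ^ n * ofDigits d) = ofDigits (fun i => d (i + n)) := by
  rw [pow_mul_ofDigits, Int.fract_natCast_add,
    Int.fract_eq_self.mpr ⟨ofDigits_nonneg _, ofDigits_lt_one (i := i) hi⟩]

end Real

theorem levinN_one : levinN 1 = 0 := rfl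

theorem levinN_succ {m : ℕ} (hm : 1 ≤ m) : levinN (m + 1) = levinN m + 2 ^ m * 2 ^ 2 ^ m :=
  sum_Ico_succ_top hm _

theorem levinN_mono : Monotone levinN := fun _ _ h =>
  sum_le_sum_of_subset (Ico_subset_Ico le_rfl h)

theorem le_levinN_succ (p : ℕ) : p ≤ levinN (p + 1) := by
  cases p with
  | zero => exact Nat.zero_le _
  | succ p =>
    rw [levinN_succ (by omega)]
    have := Nat.lt_two_pow_self (n := p + 1)
    have : 1 ≤ 2 ^ 2 ^ (p + 1) := Nat.one_le_two_pow
    nlinarith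

theorem lt_levinN_add_two (p : ℕ) : p < levinN (p + 2) := le_levinN_succ (p + 1)

def levinBlock (p : ℕ) : ℕ :=
  Nat.find (⟨p + 1, lt_levinN_add_two p⟩ : ∃ m, p < levinN (m + 1))

theorem levinBlock_eq {m p : ℕ} (h₁ : levinN m ≤ p) (h₂ : p < levinN (m + 1)) :
    levinBlock p = m := by
  rw [levinBlock, Nat.find_eq_iff]
  exact ⟨h₂, fun j hj => not_lt.mpr ((levinN_mono (by omega)).trans h₁)⟩

theorem levinD_lt_two (m k n : ℕ) : levinD m k n < 2 := Nat.mod_lt _ two_pos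

def levinDigit (p : ℕ) : Fin 2 :=
  ⟨levinD (levinBlock p) ((p - levinN (levinBlock p)) % 2 ^ levinBlock p)
    ((p - levinN (levinBlock p)) / 2 ^ levinBlock p), levinD_lt_two _ _ _⟩

theorem levinDigit_eq {m n k : ℕ} (hm : 1 ≤ m) (hn : n < 2 ^ 2 ^ m) (hk : k < 2 ^ m) :
    (levinDigit (levinN m + 2 ^ m * n + k) : ℕ) = levinD m k n := by
  have hblock : 2 ^ m * n + k < 2 ^ m * 2 ^ 2 ^ m := by
    calc 2 ^ m * n + k < 2 ^ m * (n + 1) := by rw [mul_add_one]; omega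
      _ ≤ 2 ^ m * 2 ^ 2 ^ m := Nat.mul_le_mul_left _ hn
  have hB : levinBlock (levinN m + 2 ^ m * n + k) = m :=
    levinBlock_eq (by omega) (by rw [levinN_succ hm]; omega)
  simp only [levinDigit, hB]
  rw [add_assoc, Nat.add_sub_cancel_left, Nat.mul_add_mod, Nat.mod_eq_of_lt hk,
    Nat.mul_add_div (Nat.two_pow_pos m), Nat.div_eq_of_lt hk, add_zero]

theorem levinD_zero (m k : ℕ) : levinD m k 0 = 0 := by
  simp [levinD]

theorem levinDigit_exists_zero (N : ℕ) : ∃ i, levinDigit (i + N) = 0 := by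
  refine ⟨levinN (N + 2) - N, Fin.ext ?_⟩
  have := levinDigit_eq (m := N + 2) (n := 0) (k := 0) (by omega) (by positivity) (by positivity)
  rw [Nat.sub_add_cancel (lt_levinN_add_two N).le]
  simpa [levinD_zero] using this

theorem levinAlpha_eq_ofDigits : levinAlpha = Real.ofDigits levinDigit := by
  have hblock : ∀ m, ∑ n ∈ range (2 ^ 2 ^ (m + 1)), ∑ k ∈ range (2 ^ (m + 1)),
      (levinD (m + 1) k n : ℝ) / 2 ^ (levinN (m + 1) + 2 ^ (m + 1) * n + k + 1) =
      ∑ p ∈ Ico (levinN (m + 1)) (levinN (m + 1 + 1)), Real.ofDigitsTerm levinDigit p := by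
    intro m
    rw [levinN_succ (m := m + 1) (by omega), sum_Ico_eq_sum_range, Nat.add_sub_cancel_left,
      sum_range_mul_eq_sum_sum]
    refine sum_congr rfl fun n hn => sum_congr rfl fun k hk => ?_
    rw [Real.ofDigitsTerm, ← add_assoc, levinDigit_eq (by omega) (mem_range.mp hn)
      (mem_range.mp hk)]
    simp [div_eq_mul_inv]
  rw [levinAlpha, funext hblock]
  exact (hasSum_sum_Ico_of_nonneg Real.summable_ofDigitsTerm (fun _ => Real.ofDigitsTerm_nonneg)
    (s := fun m => levinN (m + 1)) (fun _ _ h => levinN_mono (Nat.succ_le_succ h)) levinN_one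
    (tendsto_atTop_mono le_levinN_succ tendsto_id)).tsum_eq

theorem fract_two_pow_mul_levinAlpha_mem_Ico_iff (N i c : ℕ) :
    Int.fract (2 ^ N * levinAlpha) ∈ Set.Ico ((c : ℝ) / 2 ^ i) ((c + 1) / 2 ^ i) ↔
      Real.digitPrefix (fun t => levinDigit (t + N)) i = c := by
  obtain ⟨p, hp⟩ := levinDigit_exists_zero N
  obtain ⟨q, hq⟩ := levinDigit_exists_zero (i + N)
  have hfract := Real.fract_pow_mul_ofDigits (d := levinDigit) (n := N) (i := p) (by simp [hp])
  have hfloor := Real.floor_pow_mul_ofDigits (d := fun t => levinDigit (t + N)) (n := i) (i := q)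
    (by simp [add_assoc, hq])
  rw [Nat.cast_ofNat] at hfract hfloor
  rw [mem_Ico_div_iff_floor_eq (Int.fract_nonneg _) (by positivity), levinAlpha_eq_ofDigits,
    hfract, hfloor]

theorem levinD_cast (m k n : ℕ) :
    (levinD m k n : ZMod 2) =
      ∑ j ∈ range (2 ^ m), ((k + j).choose j : ZMod 2) * (n.testBit j).toNat := by
  simp [levinD, ← Nat.toNat_testBit]

theorem levinD_sub_levinD {m i k B r r' : ℕ} (hi : i ≤ 2 ^ m) (hr : r < 2 ^ i)
    (hr' : r' < 2 ^ i) :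
    (levinD m k (B * 2 ^ i + r) : ZMod 2) - levinD m k (B * 2 ^ i + r') =
      ∑ j ∈ range i, ((k + j).choose j : ZMod 2) *
        ((r.testBit j).toNat - (r'.testBit j).toNat) := by
  simp only [levinD_cast, ← sum_sub_distrib, ← mul_sub, mul_comm B,
    Nat.testBit_two_pow_mul_add _ hr, Nat.testBit_two_pow_mul_add _ hr']
  rw [← sum_range_add_sum_Ico _ hi, sum_eq_zero (s := Ico i _) fun j hj => by
    simp [(mem_Ico.mp hj).1.not_gt], add_zero]
  exact sum_congr rfl fun j hj => by simp [mem_range.mp hj]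

theorem eq_of_forall_levinD_eq {m i k B r r' : ℕ} (hi : i ≤ 2 ^ m) (hr : r < 2 ^ i)
    (hr' : r' < 2 ^ i)
    (h : ∀ t < i, levinD m (k + t) (B * 2 ^ i + r) = levinD m (k + t) (B * 2 ^ i + r')) :
    r = r' := by
  let M : Matrix (Fin i) (Fin i) (ZMod 2) := .of fun t j => ((k + t + j).choose j : ZMod 2)
  let w : Fin i → ZMod 2 := fun j => (r.testBit j).toNat - (r'.testBit j).toNat
  have hMw : M.mulVec w = 0 := by
    ext t
    have hdiff := levinD_sub_levinD (k := k + t) (B := B) hi hr hr'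
    rw [h t t.isLt, sub_self, ← Fin.sum_univ_eq_sum_range] at hdiff
    simpa [M, w, Matrix.mulVec, dotProduct] using hdiff.symm
  have hw := Matrix.eq_zero_of_mulVec_eq_zero (by simp [M, Matrix.det_choose_add_add]) hMw
  refine Nat.eq_of_testBit_eq_of_lt_two_pow hr hr' fun j hj => ?_
  have hbit := sub_eq_zero.mp (congrFun hw ⟨j, hj⟩)
  revert hbit
  cases r.testBit j <;> cases r'.testBit j <;> decide

theorem injOn_levinDigit_window {m i k B : ℕ} (hm : 1 ≤ m) (hki : k + i ≤ 2 ^ m)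
    (hB : B < 2 ^ (2 ^ m - i)) :
    Set.InjOn (fun n => Real.digitPrefix (fun t => levinDigit (t + (levinN m + 2 ^ m * n + k))) i)
      (Set.Ico (B * 2 ^ i) (B * 2 ^ i + 2 ^ i)) := by
  rintro n ⟨hn₁, hn₂⟩ n' ⟨hn₁', hn₂'⟩ h
  have hdigits := Real.eq_of_digitPrefix_eq h
  have hsize : B * 2 ^ i + 2 ^ i ≤ 2 ^ 2 ^ m := calc
    B * 2 ^ i + 2 ^ i = (B + 1) * 2 ^ i := by ring
    _ ≤ 2 ^ (2 ^ m - i) * 2 ^ i := Nat.mul_le_mul_right _ hB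
    _ = 2 ^ 2 ^ m := by rw [← pow_add, Nat.sub_add_cancel (by omega)]
  obtain ⟨r, rfl⟩ := Nat.exists_eq_add_of_le hn₁
  obtain ⟨r', rfl⟩ := Nat.exists_eq_add_of_le hn₁'
  have hwindow : ∀ r < 2 ^ i, ∀ t < i,
      (levinDigit (t + (levinN m + 2 ^ m * (B * 2 ^ i + r) + k)) : ℕ) =
        levinD m (k + t) (B * 2 ^ i + r) := fun r hr t ht => by
    rw [show t + (levinN m + 2 ^ m * (B * 2 ^ i + r) + k) =
      levinN m + 2 ^ m * (B * 2 ^ i + r) + (k + t) by ring]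
    exact levinDigit_eq hm (by omega) (by omega)
  congr 1
  refine eq_of_forall_levinD_eq (m := m) (i := i) (k := k) (B := B) (by omega) (by omega)
    (by omega) fun t ht => ?_
  rw [← hwindow r (by omega) t ht, ← hwindow r' (by omega) t ht, hdigits t ht]

theorem levin_unique_point_general (m : ℕ) (hm : 1 ≤ m) (i k : ℕ)
    (hki : k + i ≤ 2 ^ m) (B : ℕ) (hB : B < 2 ^ (2 ^ m - i))
    (c : ℕ) (hc : c < 2 ^ i) :
    ∃! n : ℕ, (B * 2 ^ i ≤ n ∧ n < B * 2 ^ i + 2 ^ i) ∧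
      Int.fract (2 ^ (levinN m + 2 ^ m * n + k) * levinAlpha) ∈
        Set.Ico ((c : ℝ) / 2 ^ i) (((c : ℝ) + 1) / 2 ^ i) := by
  simp only [fract_two_pow_mul_levinAlpha_mem_Ico_iff]
  exact existsUnique_mem_Ico_of_injOn (fun n => Real.digitPrefix_lt _ _)
    (injOn_levinDigit_window hm hki hB) hc

/-- For `m ≥ 1`, `0 ≤ i < 2^m`, `0 ≤ k < 2^m` with `k + i ≤ 2^m`, `0 ≤ B < 2^{2^m−i}`
and `0 ≤ c < 2^i`, there is exactly one `n` with `B·2^i ≤ n < B·2^i + 2^i` such that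
`{2^{n_m + 2^m n + k} α} ∈ [c/2^i, (c+1)/2^i)`. -/
theorem levin_unique_point (m : ℕ) (hm : 1 ≤ m) (i k : ℕ) (hi : i < 2 ^ m)
    (hk : k < 2 ^ m) (hki : k + i ≤ 2 ^ m) (B : ℕ) (hB : B < 2 ^ (2 ^ m - i))
    (c : ℕ) (hc : c < 2 ^ i) :
    ∃! n : ℕ, (B * 2 ^ i ≤ n ∧ n < B * 2 ^ i + 2 ^ i) ∧
      Int.fract (2 ^ (levinN m + 2 ^ m * n + k) * levinAlpha) ∈
        Set.Ico ((c : ℝ) / 2 ^ i) (((c : ℝ) + 1) / 2 ^ i) :=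
  levin_unique_point_general m hm i k hki B hB c hc
end
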